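/- Let μ be a closed Lagrangian subspace, and let θ, θ̃ be closed Lagrangian subspaces transverse to μ (θ∩μ = θ̃∩μ = {0}) which almost coincide (dim θ/(θ∩θ̃) = dim θ̃/(θ∩θ̃) < ∞). Writing θ and θ̃ as graphs of bounded operators T_θ, T_θ̃ : μ → J(μ), the difference T_θ − T_θ̃ is a finite rank operator. -/

import Mathlib

/-! If `θ` and `θ̃` are the graphs of `T_θ, T_θ̃ : μ → J(μ)`, then `x ∈ μ` lies in the kernel of
`T_θ − T_θ̃` as soon as `x + T_θ x ∈ θ̃`, because `μ ∩ J(μ) = 0` makes graph representations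
unique. Hence `T_θ − T_θ̃` factors through `x ↦ [x + T_θ x] ∈ θ / (θ ∩ θ̃)`, a map into a
finite-dimensional space. -/

open Module RealInnerProductSpace

variable {H : Type*} [NormedAddCommGroup H] [InnerProductSpace ℝ H] [CompleteSpace H]

/-- A closed Lagrangian subspace of the real symplectic Hilbert space `H` with symplectic
form `ω(x,y) = ⟪J x, y⟫`: a closed subspace which equals its own `ω`-annihilator. -/
def IsLagrangian (J : H →L[ℝ] H) (lam : Submodule ℝ H) : Prop :=
  IsClosed (lam : Set H) ∧ ∀ x : H, x ∈ lam ↔ ∀ y ∈ lam, ⟪J x, y⟫ = 0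

/-- The pair `(lam, mu)` is a Fredholm pair of subspaces. -/
def IsFredholmPair (lam mu : Submodule ℝ H) : Prop :=
  FiniteDimensional ℝ ↥(lam ⊓ mu) ∧ IsClosed ((lam ⊔ mu : Submodule ℝ H) : Set H) ∧
    FiniteDimensional ℝ (H ⧸ (lam ⊔ mu))

/-- A bounded real-linear operator is Fredholm. -/
def IsFredholmR (T : H →L[ℝ] H) : Prop :=
  FiniteDimensional ℝ (LinearMap.ker (T : H →ₗ[ℝ] H)) ∧ IsClosed (LinearMap.range (T : H →ₗ[ℝ] H) : Set H) ∧
    FiniteDimensional ℝ (H ⧸ LinearMap.range (T : H →ₗ[ℝ] H))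

/-- The orthogonal projection onto a closed subspace, as an operator `H → H`. -/
noncomputable def projCLM (lam : Submodule ℝ H) [CompleteSpace lam] : H →L[ℝ] H :=
  lam.subtypeL.comp (lam.orthogonalProjection)

/-- The conjugation `τ_λ = 2P(λ) − Id` determined by the real structure `λ`. -/
noncomputable def conjOf (lam : Submodule ℝ H) [CompleteSpace lam] : H →L[ℝ] H :=
  (2 : ℝ) • projCLM lam - 1

theorem LinearMap.finiteDimensional_range_of_ker_le {K M N P : Type*} [DivisionRing K]
    [AddCommGroup M] [Module K M] [AddCommGroup N] [Module K N] [AddCommGroup P] [Module K P]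
    [FiniteDimensional K P] (f : M →ₗ[K] N) (g : M →ₗ[K] P) (h : ker g ≤ ker f) :
    FiniteDimensional K (range f) := by
  have : FiniteDimensional K (M ⧸ ker g) := g.quotKerEquivRange.symm.finiteDimensional
  have : FiniteDimensional K (M ⧸ ker f) :=
    Module.Finite.of_surjective _ (Submodule.factor_surjective h)
  exact f.quotKerEquivRange.finiteDimensional

theorem Submodule.eq_and_eq_of_add_eq_add {R M : Type*} [Ring R] [AddCommGroup M] [Module R M]
    {U V : Submodule R M} (hUV : Disjoint U V) {a b c d : M} (ha : a ∈ U) (hb : b ∈ U)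
    (hc : c ∈ V) (hd : d ∈ V) (h : a + c = b + d) : a = b ∧ c = d := by
  have hab : a - b = d - c := by rw [sub_eq_sub_iff_add_eq_add, h, add_comm]
  have : a - b = 0 :=
    Submodule.disjoint_def.mp hUV _ (sub_mem ha hb) (hab ▸ sub_mem hd hc)
  obtain rfl := sub_eq_zero.mp this
  exact ⟨rfl, add_left_cancel h⟩

theorem disjoint_map_of_isotropic {E : Type*} [NormedAddCommGroup E] [InnerProductSpace ℝ E]
    {J : E →L[ℝ] E} {U : Submodule ℝ E}
    (hiso : ∀ x ∈ U, ∀ y ∈ U, ⟪J x, y⟫ = 0) : Disjoint U (U.map (J : E →ₗ[ℝ] E)) := by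
  refine Submodule.disjoint_def.mpr fun z hz hJz => ?_
  obtain ⟨w, hw, rfl⟩ := Submodule.mem_map.mp hJz
  exact inner_self_eq_zero.mp (hiso w hw _ hz)

theorem graph_difference_finiteRank_general
    (J : H →L[ℝ] H) (mu theta theta' : Submodule ℝ H)
    (hmu : IsLagrangian J mu)
    (Tθ Tθ' : ↥mu →L[ℝ] H)
    (hTθrange : ∀ x : mu, Tθ x ∈ mu.map (J : H →ₗ[ℝ] H))
    (hTθ'range : ∀ x : mu, Tθ' x ∈ mu.map (J : H →ₗ[ℝ] H))
    (hgraph : (theta : Set H) = Set.range fun x : mu => (x : H) + Tθ x)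
    (hgraph' : (theta' : Set H) = Set.range fun x : mu => (x : H) + Tθ' x)
    (halmost₁ : FiniteDimensional ℝ (theta ⧸ ((theta ⊓ theta').comap theta.subtype))) :
    FiniteDimensional ℝ (LinearMap.range ((Tθ - Tθ' : ↥mu →L[ℝ] H) : ↥mu →ₗ[ℝ] H)) := by
  have hdisj : Disjoint mu (mu.map (J : H →ₗ[ℝ] H)) :=
    disjoint_map_of_isotropic fun x hx => (hmu.2 x).mp hx
  let graph : mu →ₗ[ℝ] theta :=
    LinearMap.codRestrict theta (mu.subtype + (Tθ : mu →ₗ[ℝ] H)) fun x =>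
      (hgraph.symm ▸ ⟨x, rfl⟩ : (x : H) + Tθ x ∈ (theta : Set H))
  refine LinearMap.finiteDimensional_range_of_ker_le _
    (((theta ⊓ theta').comap theta.subtype).mkQ ∘ₗ graph) fun x hx => ?_
  rw [LinearMap.mem_ker, LinearMap.comp_apply, Submodule.mkQ_apply,
    Submodule.Quotient.mk_eq_zero, Submodule.mem_comap] at hx
  have hx' : (x : H) + Tθ x ∈ (theta' : Set H) := (Submodule.mem_inf.mp hx).2
  rw [hgraph'] at hx'
  obtain ⟨y, hy⟩ := hx'
  obtain ⟨hyx, hTyx⟩ :=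
    Submodule.eq_and_eq_of_add_eq_add hdisj y.2 x.2 (hTθ'range y) (hTθrange x) hy
  rw [Subtype.ext hyx] at hTyx
  exact LinearMap.mem_ker.mpr (sub_eq_zero.mpr hTyx.symm)

/-- Let `μ` be a closed Lagrangian subspace, and `θ, θ̃` closed Lagrangian subspaces
transverse to `μ` which almost coincide (their intersection has the same finite codimension
in each).  Writing `θ` and `θ̃` as graphs of bounded operators `T_θ, T_θ̃ : μ → J(μ)`, the
difference `T_θ − T_θ̃` is a finite rank operator. -/
theorem graph_difference_finiteRank
    (J : H →L[ℝ] H) (hJ2 : J ∘L J = -1)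
    (hJorth : ∀ x y : H, ⟪J x, J y⟫ = ⟪x, y⟫)
    (mu theta theta' : Submodule ℝ H)
    (hmu : IsLagrangian J mu) (htheta : IsLagrangian J theta) (htheta' : IsLagrangian J theta')
    (htrans : theta ⊓ mu = ⊥) (htrans' : theta' ⊓ mu = ⊥)
    (Tθ Tθ' : ↥mu →L[ℝ] H)
    (hTθrange : ∀ x : mu, Tθ x ∈ mu.map (J : H →ₗ[ℝ] H))
    (hTθ'range : ∀ x : mu, Tθ' x ∈ mu.map (J : H →ₗ[ℝ] H))
    (hgraph : (theta : Set H) = Set.range fun x : mu => (x : H) + Tθ x)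
    (hgraph' : (theta' : Set H) = Set.range fun x : mu => (x : H) + Tθ' x)
    (halmost₁ : FiniteDimensional ℝ (theta ⧸ ((theta ⊓ theta').comap theta.subtype)))
    (halmost₂ : FiniteDimensional ℝ (theta' ⧸ ((theta ⊓ theta').comap theta'.subtype)))
    (halmost₃ : Module.finrank ℝ (theta ⧸ ((theta ⊓ theta').comap theta.subtype)) =
      Module.finrank ℝ (theta' ⧸ ((theta ⊓ theta').comap theta'.subtype))) :
    FiniteDimensional ℝ (LinearMap.range ((Tθ - Tθ' : ↥mu →L[ℝ] H) : ↥mu →ₗ[ℝ] H)) :=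
  graph_difference_finiteRank_general J mu theta theta' hmu Tθ Tθ' hTθrange hTθ'range hgraph hgraph'
    halmost₁
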